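/- There exists a natural number N such that for all n ≥ N, the graph S_n satisfies P_{S_n}(n² − 6n + 5)·P_{S_n}(n² − 6n + 7) > P_{S_n}(n² − 6n + 6)². That is, the number of proper colorings of S_n fails log-concavity at q = n² − 6n + 6 for all sufficiently large n, even though the maximum degree of S_n is n² − 1. -/

import Mathlib

/-- The nine (0-indexed) block pairs `(i,j)`, `i < j`, between which all edges of Seymour's
graph `H` are present; 1-indexed they are
`(1,2),(1,3),(2,3),(2,4),(3,4),(1,5),(3,5),(1,6),(2,6)`. -/
def seymourPairs : List (Fin 6 × Fin 6) :=
  [(0,1), (0,2), (1,2), (1,3), (2,3), (0,4), (2,4), (0,5), (1,5)]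

/-- Seymour's graph `H_n` on the vertex set `{1,…,6} × {1,…,n}` (six blocks of size `n`):
a vertex in block `i` is adjacent to a vertex in block `j` (for `i < j`) iff `(i,j)` is one of
the pairs `(1,2),(1,3),(2,3),(2,4),(3,4),(1,5),(3,5),(1,6),(2,6)`; no edges inside a block. -/
def seymourH (n : ℕ) : SimpleGraph (Fin 6 × Fin n) :=
  SimpleGraph.fromRel (fun x y => (x.1, y.1) ∈ seymourPairs)

instance (n : ℕ) : DecidableRel (seymourH n).Adj := fun x y =>
  decidable_of_iff' _ (SimpleGraph.fromRel_adj _ x y)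
/-- The graph obtained from `G` by adding `m` new vertices, each adjacent to every other
vertex (the other new vertices included). -/
def addDominating {V : Type*} (G : SimpleGraph V) (m : ℕ) : SimpleGraph (V ⊕ Fin m) where
  Adj x y :=
    match x, y with
    | Sum.inl u, Sum.inl v => G.Adj u v
    | Sum.inl _, Sum.inr _ => True
    | Sum.inr _, Sum.inl _ => True
    | Sum.inr i, Sum.inr j => i ≠ j
  symm := by
    refine ⟨?_⟩
    rintro (u | i) (v | j) h
    · exact G.symm.symm _ _ h
    · trivial
    · trivial
    · exact Ne.symm h
  loopless := by
    refine ⟨?_⟩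
    rintro (u | i) h
    · exact G.loopless.irrefl u h
    · exact h rfl

instance {V : Type*} (G : SimpleGraph V) [h : DecidableRel G.Adj] (m : ℕ) :
    DecidableRel (addDominating G m).Adj
  | Sum.inl u, Sum.inl v => h u v
  | Sum.inl _, Sum.inr _ => .isTrue trivial
  | Sum.inr _, Sum.inl _ => .isTrue trivial
  | Sum.inr i, Sum.inr j => inferInstanceAs (Decidable (i ≠ j))

/-- The graph `S_n` on `n²` vertices: Seymour's graph `H_n` on the `6n` vertices
`{1,…,6} × {1,…,n}`, together with `n² - 6n` additional vertices each adjacent to every other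
vertex of the graph. -/
def seymourS (n : ℕ) : SimpleGraph ((Fin 6 × Fin n) ⊕ Fin (n ^ 2 - 6 * n)) :=
  addDominating (seymourH n) (n ^ 2 - 6 * n)

/-! With `m = n² - 6n` dominating vertices, `P_{S_n}(m + k) = (m + k)⋯(k + 1) · P_{H_n}(k)`.
The falling-factorial factor is log-concave in `k`, but barely: its square at `k = 6` exceeds
the product of its neighbours by less than a factor `7/6`. Meanwhile `H_n` is the blow-up of
the six-vertex graph `seymourBase`, and a 6-colouring of `H_n` is determined by the colour sets
used on the blocks together with a choice inside them; these sets are disjoint along the four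
triangles of `seymourBase`, which caps the product of their sizes at `72`, so
`P_{H_n}(6) ≤ 2³⁶ · 72ⁿ`. Explicit palettes give `P_{H_n}(5) ≥ 27ⁿ` and `P_{H_n}(7) ≥ 216ⁿ`,
and `27 · 216 = (9/8) · 72²`: the exponential gain eventually beats every constant. -/

open Finset

namespace SimpleGraph

variable {V ι α : Type*}

def AdjDisjoint (K : SimpleGraph ι) (T : ι → Finset α) : Prop :=
  ∀ ⦃i j⦄, K.Adj i j → Disjoint (T i) (T j)

def addDominatingColoringEquiv (G : SimpleGraph V) (m : ℕ) :
    (addDominating G m).Coloring α ≃ Σ f : Fin m ↪ α, G.Coloring ↥(Set.range f)ᶜ where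
  toFun c :=
    ⟨⟨fun j => c (.inr j), fun i j h => by_contra fun hij =>
        c.valid (show (addDominating G m).Adj (.inr i) (.inr j) from hij) h⟩,
      ⟨fun v => ⟨c (.inl v), by
          rintro ⟨j, hj⟩
          exact c.valid (show (addDominating G m).Adj (.inl v) (.inr j) from trivial) hj.symm⟩,
        fun h he => c.valid (show (addDominating G m).Adj (.inl _) (.inl _) from h)
          (congrArg Subtype.val he)⟩⟩
  invFun p := ⟨Sum.elim (fun v => (p.2 v : α)) p.1, by
    rintro (u | i) (v | j) h
    · exact fun he => p.2.valid h (Subtype.ext he)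
    · exact fun he => (p.2 u).2 ⟨j, he.symm⟩
    · exact fun he => (p.2 v).2 ⟨i, he⟩
    · exact p.1.injective.ne h⟩
  left_inv c := by ext (v | j) <;> rfl
  right_inv p := rfl

theorem card_coloring_addDominating [Fintype V] [Fintype α] (G : SimpleGraph V) (m : ℕ) :
    Fintype.card ((addDominating G m).Coloring α) =
      (Fintype.card α).descFactorial m * Fintype.card (G.Coloring (Fin (Fintype.card α - m))) := by
  classical
  have hfiber (f : Fin m ↪ α) : Fintype.card (G.Coloring ↥(Set.range f)ᶜ) =
      Fintype.card (G.Coloring (Fin (Fintype.card α - m))) :=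
    Fintype.card_congr <| G.recolorOfEquiv <| Fintype.equivFinOfCardEq <| by
      rw [Fintype.card_compl_set, Set.card_range_of_injective f.injective, Fintype.card_fin]
  rw [Fintype.card_congr (addDominatingColoringEquiv G m), Fintype.card_sigma]
  simp only [hfiber, Finset.sum_const, Finset.card_univ, Fintype.card_embedding_eq,
    Fintype.card_fin, smul_eq_mul]

theorem prod_card_le_card_coloring [Fintype V] [Fintype α] {G : SimpleGraph V} {L : V → Finset α}
    (hL : G.AdjDisjoint L) : ∏ v, #(L v) ≤ Fintype.card (G.Coloring α) := by
  classical
  let color (x : ∀ v, L v) : G.Coloring α :=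
    ⟨fun v => x v, fun {u v} h he => Finset.disjoint_left.mp (hL h) (x u).2 (he ▸ (x v).2)⟩
  calc ∏ v, #(L v) = Fintype.card (∀ v, L v) := by simp [Fintype.card_pi]
    _ ≤ _ := Fintype.card_le_of_injective color fun x y h =>
      funext fun v => Subtype.ext (DFunLike.congr_fun h v)

theorem card_coloring_comap_le [Fintype V] [Fintype ι] [Fintype α] {K : SimpleGraph ι} {b : V → ι}
    {B : ℕ} (hB : ∀ T : ι → Finset α, K.AdjDisjoint T → ∏ v, #(T (b v)) ≤ B) :
    Fintype.card ((K.comap b).Coloring α) ≤ 2 ^ (Fintype.card ι * Fintype.card α) * B := by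
  classical
  -- A colouring is determined by its profile, the colour sets it uses on the fibres of `b`,
  -- together with the colour of each vertex inside the set of its fibre.
  let profile (c : (K.comap b).Coloring α) : {T : ι → Finset α // K.AdjDisjoint T} :=
    ⟨fun i => univ.filter (b · = i) |>.image c, fun i j hij => by
      simp only [Finset.disjoint_left, mem_image, mem_filter, mem_univ, true_and]
      rintro _ ⟨u, rfl, rfl⟩ ⟨w, rfl, hw⟩
      exact c.valid (show K.Adj (b u) (b w) from hij) hw.symm⟩
  let F (c : (K.comap b).Coloring α) : Σ T : {T // K.AdjDisjoint T}, ∀ v, T.1 (b v) :=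
    ⟨profile c, fun v => ⟨c v, mem_image_of_mem _ (by simp)⟩⟩
  have hF : Function.Injective F := fun c c' h => by
    ext v
    simpa [F] using congrArg (fun s => (s.2 v : α)) h
  calc Fintype.card ((K.comap b).Coloring α)
      ≤ Fintype.card (Σ T : {T // K.AdjDisjoint T}, ∀ v, T.1 (b v)) :=
        Fintype.card_le_of_injective F hF
    _ = ∑ T : {T // K.AdjDisjoint T}, ∏ v, #(T.1 (b v)) := by
        simp [Fintype.card_sigma, Fintype.card_pi]
    _ ≤ ∑ _T : {T // K.AdjDisjoint T}, B := sum_le_sum fun T _ => hB T.1 T.2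
    _ ≤ 2 ^ (Fintype.card ι * Fintype.card α) * B := by
        rw [sum_const, card_univ, smul_eq_mul]
        gcongr
        calc Fintype.card {T // K.AdjDisjoint T} ≤ Fintype.card (ι → Finset α) :=
              Fintype.card_subtype_le _
          _ = 2 ^ (Fintype.card ι * Fintype.card α) := by
              rw [Fintype.card_fun, Fintype.card_finset, ← pow_mul, mul_comm]

end SimpleGraph

open SimpleGraph

theorem card_add_card_add_card_le {α : Type*} [Fintype α] {s t u : Finset α} (hst : Disjoint s t)
    (hsu : Disjoint s u) (htu : Disjoint t u) : #s + #t + #u ≤ Fintype.card α := by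
  classical
  rw [← card_union_of_disjoint hst, ← card_union_of_disjoint (disjoint_union_left.2 ⟨hsu, htu⟩)]
  exact card_le_univ _

theorem succ_mul_descFactorial_sq_le (m k : ℕ) :
    (k + 1) * (m + (k + 1)).descFactorial m ^ 2 ≤
      (k + 2) * (m + k).descFactorial m * (m + (k + 2)).descFactorial m := by
  have step (j : ℕ) : (j + 1) * (m + (j + 1)).descFactorial m =
      (m + (j + 1)) * (m + j).descFactorial m := by
    simpa [Nat.add_sub_cancel_left, add_assoc, add_comm] using Nat.succ_descFactorial (m + j) m
  have h1 := step k
  have h2 := step (k + 1)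
  nlinarith

theorem seven_mul_two_pow_mul_lt {n : ℕ} (hn : 444 ≤ n) : 7 * 2 ^ 72 * 8 ^ n < 6 * 9 ^ n := by
  obtain ⟨t, rfl⟩ := Nat.exists_eq_add_of_le hn
  have h444 : 2 ^ 74 * 8 ^ 444 ≤ 9 ^ 444 :=
    calc 2 ^ 74 * 8 ^ 444 = (2 * 8 ^ 6) ^ 74 := by rw [mul_pow, ← pow_mul]
      _ ≤ (9 ^ 6) ^ 74 := Nat.pow_le_pow_left (by norm_num) 74
      _ = 9 ^ 444 := by rw [← pow_mul]
  calc 7 * 2 ^ 72 * 8 ^ (444 + t) < 6 * 2 ^ 74 * (8 ^ 444 * 8 ^ t) := by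
        rw [pow_add]; exact Nat.mul_lt_mul_of_pos_right (by norm_num) (by positivity)
    _ ≤ 6 * (9 ^ 444 * 9 ^ t) := by
        rw [mul_assoc, ← mul_assoc (2 ^ 74)]
        exact Nat.mul_le_mul_left 6 (Nat.mul_le_mul h444 (Nat.pow_le_pow_left (by norm_num) t))
    _ = 6 * 9 ^ (444 + t) := by rw [pow_add]

theorem seven_mul_sq_lt_six_mul {n : ℕ} (hn : 444 ≤ n) :
    7 * (2 ^ 36 * 72 ^ n) ^ 2 < 6 * (27 ^ n * 216 ^ n) := by
  have hL : (2 ^ 36 * 72 ^ n) ^ 2 = 2 ^ 72 * (8 * 648) ^ n := by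
    rw [mul_pow, ← pow_mul, pow_right_comm]; norm_num
  have hR : 27 ^ n * 216 ^ n = (9 * 648) ^ n := by rw [← mul_pow]; norm_num
  rw [hL, hR, mul_pow, mul_pow, ← mul_assoc, ← mul_assoc, ← mul_assoc]
  exact Nat.mul_lt_mul_of_pos_right (seven_mul_two_pow_mul_lt hn) (by positivity)

def seymourBase : SimpleGraph (Fin 6) :=
  SimpleGraph.fromRel fun i j => (i, j) ∈ seymourPairs

theorem seymourPairs_fst_ne_snd : ∀ p ∈ seymourPairs, p.1 ≠ p.2 := by decide

theorem adjDisjoint_seymourBase_iff {α : Type*} {T : Fin 6 → Finset α} :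
    seymourBase.AdjDisjoint T ↔ ∀ p ∈ seymourPairs, Disjoint (T p.1) (T p.2) := by
  refine ⟨fun h p hp => h ((fromRel_adj _ _ _).2 ⟨seymourPairs_fst_ne_snd p hp, .inl hp⟩), ?_⟩
  rintro h i j ⟨-, hij | hji⟩
  · exact h _ hij
  · exact (h _ hji).symm

theorem seymourH_eq_comap (n : ℕ) : seymourH n = seymourBase.comap Prod.fst := by
  ext x y
  simp only [seymourH, seymourBase, fromRel_adj, comap_adj]
  refine and_congr_left fun h => ⟨fun _ => ?_, fun h' e => h' (congrArg Prod.fst e)⟩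
  exact h.elim (seymourPairs_fst_ne_snd _) fun h' => (seymourPairs_fst_ne_snd _ h').symm

theorem prod_card_le_of_adjDisjoint_seymourBase {T : Fin 6 → Finset (Fin 6)}
    (hT : seymourBase.AdjDisjoint T) : ∏ i, #(T i) ≤ 72 := by
  rw [adjDisjoint_seymourBase_iff] at hT
  have triangle (i j k : Fin 6) (hij : (i, j) ∈ seymourPairs) (hik : (i, k) ∈ seymourPairs)
      (hjk : (j, k) ∈ seymourPairs) : #(T i) + #(T j) + #(T k) ≤ 6 := by
    simpa using card_add_card_add_card_le (hT (i, j) hij) (hT (i, k) hik) (hT (j, k) hjk)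
  have h012 := triangle 0 1 2 (by decide) (by decide) (by decide)
  have h123 := triangle 1 2 3 (by decide) (by decide) (by decide)
  have h024 := triangle 0 2 4 (by decide) (by decide) (by decide)
  have h015 := triangle 0 1 5 (by decide) (by decide) (by decide)
  have key : ∀ a b c : Fin 7, (a : ℕ) * b * c * (6 - b - c) * (6 - a - c) * (6 - a - b) ≤ 72 := by
    decide
  rw [Fin.prod_univ_six]
  calc #(T 0) * #(T 1) * #(T 2) * #(T 3) * #(T 4) * #(T 5)
      ≤ #(T 0) * #(T 1) * #(T 2) * (6 - #(T 1) - #(T 2)) * (6 - #(T 0) - #(T 2)) *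
          (6 - #(T 0) - #(T 1)) := by gcongr <;> omega
    _ ≤ 72 := key ⟨#(T 0), by omega⟩ ⟨#(T 1), by omega⟩ ⟨#(T 2), by omega⟩

theorem card_coloring_seymourH_six_le (n : ℕ) :
    Fintype.card ((seymourH n).Coloring (Fin 6)) ≤ 2 ^ 36 * 72 ^ n := by
  rw [seymourH_eq_comap]
  calc _ ≤ 2 ^ (Fintype.card (Fin 6) * Fintype.card (Fin 6)) * 72 ^ n :=
        card_coloring_comap_le fun T hT => calc
          ∏ v : Fin 6 × Fin n, #(T v.1) = (∏ i, #(T i)) ^ n := by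
            simp [Fintype.prod_prod_type, prod_pow]
          _ ≤ 72 ^ n := Nat.pow_le_pow_left (prod_card_le_of_adjDisjoint_seymourBase hT) n
    _ = 2 ^ 36 * 72 ^ n := by simp

theorem pow_prod_card_le_card_coloring_seymourH {k : ℕ} {pal : Fin 6 → Finset (Fin k)}
    (hpal : ∀ p ∈ seymourPairs, Disjoint (pal p.1) (pal p.2)) (n : ℕ) :
    (∏ i, #(pal i)) ^ n ≤ Fintype.card ((seymourH n).Coloring (Fin k)) := by
  rw [seymourH_eq_comap]
  calc (∏ i, #(pal i)) ^ n = ∏ v : Fin 6 × Fin n, #(pal v.1) := by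
        simp [Fintype.prod_prod_type, prod_pow]
    _ ≤ _ := prod_card_le_card_coloring (L := fun v : Fin 6 × Fin n => pal v.1) fun _ _ h =>
        adjDisjoint_seymourBase_iff.2 hpal h

theorem pow_le_card_coloring_seymourH_five (n : ℕ) :
    27 ^ n ≤ Fintype.card ((seymourH n).Coloring (Fin 5)) :=
  pow_prod_card_le_card_coloring_seymourH (k := 5)
    (pal := ![{0}, {1}, {2}, {0, 3, 4}, {1, 3, 4}, {2, 3, 4}]) (by decide) n

theorem pow_le_card_coloring_seymourH_seven (n : ℕ) :
    216 ^ n ≤ Fintype.card ((seymourH n).Coloring (Fin 7)) :=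
  pow_prod_card_le_card_coloring_seymourH (k := 7)
    (pal := ![{0, 1}, {2, 3}, {4, 5}, {0, 1, 6}, {2, 3, 6}, {4, 5, 6}]) (by decide) n

theorem card_coloring_seymourS (n k : ℕ) :
    Fintype.card ((seymourS n).Coloring (Fin (n ^ 2 - 6 * n + k))) =
      (n ^ 2 - 6 * n + k).descFactorial (n ^ 2 - 6 * n) *
        Fintype.card ((seymourH n).Coloring (Fin k)) := by
  rw [seymourS, card_coloring_addDominating, Fintype.card_fin, Nat.add_sub_cancel_left]

/-- For all sufficiently large `n`, the graph `S_n` (which has maximum degree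
`n² - 1`) violates log-concavity of the number of proper colorings at `q = n² - 6n + 6`:
`P_{S_n}(n² - 6n + 5) · P_{S_n}(n² - 6n + 7) > P_{S_n}(n² - 6n + 6)²`. -/
theorem seymourS_not_log_concave :
    ∃ N : ℕ, ∀ n : ℕ, N ≤ n →
      Fintype.card ((seymourS n).Coloring (Fin (n ^ 2 - 6 * n + 6))) ^ 2 <
        Fintype.card ((seymourS n).Coloring (Fin (n ^ 2 - 6 * n + 5))) *
          Fintype.card ((seymourS n).Coloring (Fin (n ^ 2 - 6 * n + 7))) := by
  refine ⟨444, fun n hn => ?_⟩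
  simp only [card_coloring_seymourS]
  set m := n ^ 2 - 6 * n
  set D₅ := (m + 5).descFactorial m
  set D₆ := (m + 6).descFactorial m
  set D₇ := (m + 7).descFactorial m
  have hD : 6 * D₆ ^ 2 ≤ 7 * D₅ * D₇ := succ_mul_descFactorial_sq_le m 5
  have hD₅₇ : 0 < D₅ * D₇ := Nat.mul_pos (Nat.descFactorial_pos.2 (by omega))
    (Nat.descFactorial_pos.2 (by omega))
  refine Nat.lt_of_mul_lt_mul_left (a := 6) ?_
  calc 6 * (D₆ * Fintype.card ((seymourH n).Coloring (Fin 6))) ^ 2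
      ≤ 7 * D₅ * D₇ * (2 ^ 36 * 72 ^ n) ^ 2 := by
        rw [mul_pow, ← mul_assoc]
        exact Nat.mul_le_mul hD (Nat.pow_le_pow_left (card_coloring_seymourH_six_le n) 2)
    _ = D₅ * D₇ * (7 * (2 ^ 36 * 72 ^ n) ^ 2) := by ring
    _ < D₅ * D₇ * (6 * (27 ^ n * 216 ^ n)) :=
        Nat.mul_lt_mul_of_pos_left (seven_mul_sq_lt_six_mul hn) hD₅₇
    _ = 6 * (D₅ * 27 ^ n * (D₇ * 216 ^ n)) := by ring
    _ ≤ 6 * (D₅ * Fintype.card ((seymourH n).Coloring (Fin 5)) *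
          (D₇ * Fintype.card ((seymourH n).Coloring (Fin 7)))) := by
        gcongr
        · exact pow_le_card_coloring_seymourH_five n
        · exact pow_le_card_coloring_seymourH_seven n
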